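/- With v̄ as above, the second derivatives of v̄ satisfy: |∂_{x_k x_j} v̄(x)| ≤ C/(ε + |x'|²), |∂_{x_k x_d} v̄(x)| ≤ C|x'|/(ε + |x'|²)² for k, j = 1, …, d-1, and ∂_{x_d x_d} v̄(x) = 0, for all x in the narrow region Ω_{2R}. -/

import Mathlib

/-!
Write `v̄ = (x_d - h) ψ⁻¹` with `ψ = ε + h₁ - h`. Being affine in `x_d` with slope `ψ⁻¹`, `v̄` has
`∂_{dd} v̄ = 0` and `∂_{kd} v̄ = -∂_k ψ / ψ²`, while `∂_{kj} v̄` is a combination of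
`(∂h)(∂ψ)/ψ²`, `∂²h/ψ`, `(x_d - h) ∂²ψ/ψ²` and `(x_d - h)(∂ψ)²/ψ³`.
In the narrow region `0 ≤ x_d - h ≤ ψ`; `∇h` and `∇ψ` vanish at `0` and have bounded
derivatives, so they are `O(|x'|)`; and `ψ ≥ (ε + |x'|²)/C₀` with `|x'|² ≤ ε + |x'|²`.
Hence every term is `O(1/(ε + |x'|²))` and `∂_k ψ / ψ² = O(|x'|/(ε + |x'|²)²)`.
-/

open Filter Topology Metric

variable {E F : Type*} [NormedAddCommGroup E] [NormedSpace ℝ E] [NormedAddCommGroup F]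
  [NormedSpace ℝ F]

theorem ContDiffAt.differentiableAt_fderiv {f : E → F} {x : E} (hf : ContDiffAt ℝ 2 f x) :
    DifferentiableAt ℝ (fderiv ℝ f) x :=
  (hf.fderiv_right (m := 1) le_rfl).differentiableAt one_ne_zero

theorem ContDiffAt.differentiableAt_fderiv_apply {f : E → F} {x : E} (hf : ContDiffAt ℝ 2 f x)
    (u : E) : DifferentiableAt ℝ (fun y => fderiv ℝ f y u) x :=
  hf.differentiableAt_fderiv.clm_apply (differentiableAt_const u)

theorem fderiv_sub_mul_apply {a b : E → ℝ} {x : E} (ha : DifferentiableAt ℝ a x)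
    (hb : DifferentiableAt ℝ b x) (t : ℝ) (u : E) (τ : ℝ) :
    fderiv ℝ (fun p : E × ℝ => (p.2 - a p.1) * b p.1) (x, t) (u, τ)
      = (τ - fderiv ℝ a x u) * b x + (t - a x) * fderiv ℝ b x u := by
  have ha' : HasFDerivAt (fun p : E × ℝ => a p.1) _ (x, t) :=
    ha.hasFDerivAt.comp (x, t) hasFDerivAt_fst
  have hb' : HasFDerivAt (fun p : E × ℝ => b p.1) _ (x, t) :=
    hb.hasFDerivAt.comp (x, t) hasFDerivAt_fst
  rw [((hasFDerivAt_snd.fun_sub ha').fun_mul hb').fderiv]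
  simp only [add_apply, sub_apply, smul_apply, smul_eq_mul, ContinuousLinearMap.comp_apply,
    ContinuousLinearMap.coe_fst', ContinuousLinearMap.coe_snd']
  ring

theorem fderiv_fderiv_sub_mul_apply {a b : E → ℝ} {x : E} (ha : ContDiffAt ℝ 2 a x)
    (hb : ContDiffAt ℝ 2 b x) (t : ℝ) (u : E) (τ : ℝ) (w : E) (σ : ℝ) :
    fderiv ℝ (fun p => fderiv ℝ (fun p : E × ℝ => (p.2 - a p.1) * b p.1) p (u, τ)) (x, t) (w, σ)
      = (τ - fderiv ℝ a x u) * fderiv ℝ b x w + (σ - fderiv ℝ a x w) * fderiv ℝ b x u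
        - fderiv ℝ (fun y => fderiv ℝ a y u) x w * b x
        + (t - a x) * fderiv ℝ (fun y => fderiv ℝ b y u) x w := by
  have hnear : ∀ᶠ p : E × ℝ in 𝓝 (x, t), ContDiffAt ℝ 2 a p.1 ∧ ContDiffAt ℝ 2 b p.1 :=
    (continuousAt_fst (p := (x, t))).eventually
      ((ha.eventually (by simp)).and (hb.eventually (by simp)))
  have hfirst : (fun p => fderiv ℝ (fun p : E × ℝ => (p.2 - a p.1) * b p.1) p (u, τ))
      =ᶠ[𝓝 (x, t)] fun p => (τ - fderiv ℝ a p.1 u) * b p.1 + (p.2 - a p.1) * fderiv ℝ b p.1 u := by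
    filter_upwards [hnear] with p hp
    exact fderiv_sub_mul_apply (hp.1.differentiableAt two_ne_zero)
      (hp.2.differentiableAt two_ne_zero) p.2 u τ
  have hfst {φ : E → ℝ} (hφ : DifferentiableAt ℝ φ x) :
      HasFDerivAt (fun p : E × ℝ => φ p.1) ((fderiv ℝ φ x).comp (.fst ℝ E ℝ)) (x, t) :=
    hφ.hasFDerivAt.comp (x, t) hasFDerivAt_fst
  have hDa := hfst (ha.differentiableAt_fderiv_apply u)
  have hDb := hfst (hb.differentiableAt_fderiv_apply u)
  have ha' := hfst (ha.differentiableAt two_ne_zero)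
  have hb' := hfst (hb.differentiableAt two_ne_zero)
  rw [hfirst.fderiv_eq, ((hDa.const_sub τ |>.fun_mul hb').fun_add
    ((hasFDerivAt_snd.fun_sub ha').fun_mul hDb)).fderiv]
  simp only [add_apply, sub_apply, neg_apply, smul_apply, smul_neg, smul_eq_mul,
    ContinuousLinearMap.comp_apply, ContinuousLinearMap.coe_fst', ContinuousLinearMap.coe_snd']
  ring

theorem fderiv_inv_apply {ψ : E → ℝ} {x : E} (hψ : DifferentiableAt ℝ ψ x) (hx : ψ x ≠ 0)
    (u : E) : fderiv ℝ (fun y => (ψ y)⁻¹) x u = -fderiv ℝ ψ x u / ψ x ^ 2 := by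
  have h : HasFDerivAt (fun y => (ψ y)⁻¹) _ x := (hasFDerivAt_inv hx).comp x hψ.hasFDerivAt
  rw [h.fderiv]
  simp only [ContinuousLinearMap.comp_apply, ContinuousLinearMap.toSpanSingleton_apply,
    smul_eq_mul]
  ring

theorem fderiv_fderiv_inv_apply {ψ : E → ℝ} {x : E} (hψ : ContDiffAt ℝ 2 ψ x) (hx : ψ x ≠ 0)
    (u w : E) :
    fderiv ℝ (fun y => fderiv ℝ (fun z => (ψ z)⁻¹) y u) x w
      = -fderiv ℝ (fun y => fderiv ℝ ψ y u) x w / ψ x ^ 2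
        + 2 * fderiv ℝ ψ x w * fderiv ℝ ψ x u / ψ x ^ 3 := by
  have hdiff : DifferentiableAt ℝ ψ x := hψ.differentiableAt two_ne_zero
  have hfirst : (fun y => fderiv ℝ (fun z => (ψ z)⁻¹) y u)
      =ᶠ[𝓝 x] fun y => -fderiv ℝ ψ y u * (ψ y)⁻¹ ^ 2 := by
    filter_upwards [hψ.eventually (by simp), hψ.continuousAt.eventually_ne hx] with y hy hy0
    rw [fderiv_inv_apply (hy.differentiableAt two_ne_zero) hy0, div_eq_mul_inv, inv_pow]
  have hinv : HasFDerivAt (fun y => (ψ y)⁻¹) (fderiv ℝ (fun y => (ψ y)⁻¹) x) x :=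
    (hdiff.inv hx).hasFDerivAt
  rw [hfirst.fderiv_eq,
    (((hψ.differentiableAt_fderiv_apply u).hasFDerivAt.fun_neg).fun_mul (hinv.pow 2)).fderiv]
  simp only [Nat.add_one_sub_one, pow_one, nsmul_eq_mul, Nat.cast_ofNat, neg_smul, inv_pow,
    smul_neg, add_apply, neg_apply, smul_apply, smul_eq_mul, fderiv_inv_apply hdiff hx]
  field_simp
  ring

theorem fderiv_fderiv_sub_div_apply {a ψ : E → ℝ} {x : E} (ha : ContDiffAt ℝ 2 a x)
    (hψ : ContDiffAt ℝ 2 ψ x) (hx : ψ x ≠ 0) (t : ℝ) (u : E) (τ : ℝ) (w : E) (σ : ℝ) :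
    fderiv ℝ (fun p => fderiv ℝ (fun q : E × ℝ => (q.2 - a q.1) / ψ q.1) p (u, τ)) (x, t) (w, σ)
      = -((τ - fderiv ℝ a x u) * fderiv ℝ ψ x w + (σ - fderiv ℝ a x w) * fderiv ℝ ψ x u)
          / ψ x ^ 2
        - fderiv ℝ (fun y => fderiv ℝ a y u) x w / ψ x
        - (t - a x) * (fderiv ℝ (fun y => fderiv ℝ ψ y u) x w / ψ x ^ 2
          - 2 * (fderiv ℝ ψ x w * fderiv ℝ ψ x u) / ψ x ^ 3) := by
  simp only [div_eq_mul_inv (_ - a _)]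
  rw [fderiv_fderiv_sub_mul_apply (b := fun y => (ψ y)⁻¹) ha (hψ.inv hx),
    fderiv_inv_apply (hψ.differentiableAt two_ne_zero) hx,
    fderiv_inv_apply (hψ.differentiableAt two_ne_zero) hx, fderiv_fderiv_inv_apply hψ hx]
  field_simp
  ring

theorem norm_fderiv_fderiv_eq_norm_iteratedFDeriv_two (f : E → F) (x : E) :
    ‖fderiv ℝ (fderiv ℝ f) x‖ = ‖iteratedFDeriv ℝ 2 f x‖ := by
  rw [← norm_iteratedFDeriv_one, norm_iteratedFDeriv_fderiv]

theorem norm_fderiv_fderiv_apply_le {f : E → F} {x : E}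
    (hf : DifferentiableAt ℝ (fderiv ℝ f) x) (u w : E) :
    ‖fderiv ℝ (fun y => fderiv ℝ f y u) x w‖ ≤ ‖iteratedFDeriv ℝ 2 f x‖ * ‖w‖ * ‖u‖ := by
  rw [fderiv_clm_apply hf (differentiableAt_const u),
    ← norm_fderiv_fderiv_eq_norm_iteratedFDeriv_two]
  simpa using (fderiv ℝ (fderiv ℝ f) x).le_opNorm₂ w u

theorem norm_iteratedFDeriv_const_add_sub_le {f g : E → F} {x : E} {n : ℕ} (hn : n ≠ 0)
    (hf : ContDiffAt ℝ n f x) (hg : ContDiffAt ℝ n g x) (c : F) :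
    ‖iteratedFDeriv ℝ n (fun y => c + f y - g y) x‖
      ≤ ‖iteratedFDeriv ℝ n f x‖ + ‖iteratedFDeriv ℝ n g x‖ := by
  rw [fun_iteratedFDeriv_sub_apply (contDiffAt_const.add hf) hg,
    fun_iteratedFDeriv_add_apply contDiffAt_const hf, iteratedFDeriv_const_of_ne hn,
    Pi.zero_apply, zero_add]
  exact norm_sub_le _ _

theorem norm_fderiv_le_of_norm_iteratedFDeriv_two_le {f : E → F} {r κ : ℝ} {x : E}
    (hf : ContDiffOn ℝ 2 f (ball 0 r)) (h0 : fderiv ℝ f 0 = 0)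
    (hκ : ∀ y ∈ ball (0 : E) r, ‖iteratedFDeriv ℝ 2 f y‖ ≤ κ)
    (hx : x ∈ ball (0 : E) r) : ‖fderiv ℝ f x‖ ≤ κ * ‖x‖ := by
  have hdiff : ∀ y ∈ ball (0 : E) r, DifferentiableAt ℝ (fderiv ℝ f) y := fun y hy =>
    (hf.contDiffAt (isOpen_ball.mem_nhds hy)).differentiableAt_fderiv
  have := (convex_ball (0 : E) r).norm_image_sub_le_of_norm_fderiv_le hdiff
    (fun y hy => (norm_fderiv_fderiv_eq_norm_iteratedFDeriv_two f y).trans_le (hκ y hy))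
    (mem_ball_self (pos_of_mem_ball hx)) hx
  simpa [h0] using this

theorem abs_quotient_second_deriv_le {X₁ X₂ X₃ X₄ c₁ c₂ c₃ c₄ N d : ℝ} (hd : 0 < d) (hN : 0 ≤ N)
    (hNd : N ≤ d) (h₁ : |X₁| ≤ c₁) (h₂ : |X₂| ≤ c₂) (h₃ : |X₃| ≤ c₃) (h₄ : |X₄| ≤ c₄) :
    |-X₁ / d ^ 2 - X₂ / d - N * (X₃ / d ^ 2 - 2 * X₄ / d ^ 3)|
      ≤ (c₂ + c₃) / d + (c₁ + 2 * c₄) / d ^ 2 := by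
  have abs_div_le {X c e : ℝ} (he : 0 < e) (h : |X| ≤ c) : |X / e| ≤ c / e := by
    rw [abs_div, abs_of_pos he]; gcongr
  -- `N` enters only through `N / d ∈ [0, 1]`.
  have hθ : |N / d| ≤ 1 := by
    rw [abs_of_nonneg (by positivity)]; exact (div_le_one hd).2 hNd
  have t₁ := abs_div_le (pow_pos hd 2) h₁
  have t₂ := abs_div_le hd h₂
  have t₃ : |N / d * (X₃ / d)| ≤ c₃ / d := by
    rw [abs_mul]
    exact (mul_le_mul hθ (abs_div_le hd h₃) (abs_nonneg _) zero_le_one).trans_eq (one_mul _)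
  have t₄ : |N / d * (X₄ / d ^ 2)| ≤ c₄ / d ^ 2 := by
    rw [abs_mul]
    exact (mul_le_mul hθ (abs_div_le (pow_pos hd 2) h₄) (abs_nonneg _) zero_le_one).trans_eq
      (one_mul _)
  have e : -X₁ / d ^ 2 - X₂ / d - N * (X₃ / d ^ 2 - 2 * X₄ / d ^ 3)
      = -(X₁ / d ^ 2) - X₂ / d - N / d * (X₃ / d) + 2 * (N / d * (X₄ / d ^ 2)) := by
    field_simp; ring
  have e' : (c₂ + c₃) / d + (c₁ + 2 * c₄) / d ^ 2
      = c₂ / d + c₃ / d + c₁ / d ^ 2 + 2 * (c₄ / d ^ 2) := by ring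
  rw [e, e', abs_le]
  rw [abs_le] at t₁ t₂ t₃ t₄
  constructor <;> linarith

theorem abs_fderiv_fderiv_sub_div_le {a ψ : E → ℝ} {x : E} {t : ℝ} (ha : ContDiffAt ℝ 2 a x)
    (hψ : ContDiffAt ℝ 2 ψ x) (hψx : 0 < ψ x) (ht : a x ≤ t) (ht' : t - a x ≤ ψ x) (u w : E) :
    |fderiv ℝ (fun p => fderiv ℝ (fun q : E × ℝ => (q.2 - a q.1) / ψ q.1) p (u, 0)) (x, t) (w, 0)|
      ≤ ((‖iteratedFDeriv ℝ 2 a x‖ + ‖iteratedFDeriv ℝ 2 ψ x‖) / ψ x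
          + 2 * ‖fderiv ℝ ψ x‖ * (‖fderiv ℝ a x‖ + ‖fderiv ℝ ψ x‖) / ψ x ^ 2) * (‖w‖ * ‖u‖) := by
  have hD (f : E → ℝ) (v : E) : |fderiv ℝ f x v| ≤ ‖fderiv ℝ f x‖ * ‖v‖ :=
    (fderiv ℝ f x).le_opNorm v
  have hD2 {f : E → ℝ} (hf : ContDiffAt ℝ 2 f x) :
      |fderiv ℝ (fun y => fderiv ℝ f y u) x w| ≤ ‖iteratedFDeriv ℝ 2 f x‖ * ‖w‖ * ‖u‖ :=
    norm_fderiv_fderiv_apply_le hf.differentiableAt_fderiv u w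
  have h₁ : |(0 - fderiv ℝ a x u) * fderiv ℝ ψ x w + (0 - fderiv ℝ a x w) * fderiv ℝ ψ x u|
      ≤ 2 * ‖fderiv ℝ ψ x‖ * ‖fderiv ℝ a x‖ * (‖w‖ * ‖u‖) := by
    calc _ ≤ |(0 - fderiv ℝ a x u) * fderiv ℝ ψ x w| + |(0 - fderiv ℝ a x w) * fderiv ℝ ψ x u| :=
          abs_add_le _ _
      _ = |fderiv ℝ a x u| * |fderiv ℝ ψ x w| + |fderiv ℝ a x w| * |fderiv ℝ ψ x u| := by
          simp [abs_mul]
      _ ≤ ‖fderiv ℝ a x‖ * ‖u‖ * (‖fderiv ℝ ψ x‖ * ‖w‖)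
            + ‖fderiv ℝ a x‖ * ‖w‖ * (‖fderiv ℝ ψ x‖ * ‖u‖) := by
          gcongr <;> apply hD
      _ = _ := by ring
  have h₄ : |fderiv ℝ ψ x w * fderiv ℝ ψ x u| ≤ ‖fderiv ℝ ψ x‖ ^ 2 * (‖w‖ * ‖u‖) := by
    rw [abs_mul]
    calc _ ≤ ‖fderiv ℝ ψ x‖ * ‖w‖ * (‖fderiv ℝ ψ x‖ * ‖u‖) := by gcongr <;> apply hD
      _ = _ := by ring
  rw [fderiv_fderiv_sub_div_apply ha hψ hψx.ne']
  refine (abs_quotient_second_deriv_le hψx (sub_nonneg.2 ht) ht' h₁ (hD2 ha) (hD2 hψ) h₄).trans_eq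
    ?_
  ring

theorem fderiv_fderiv_sub_div_apply_mixed {a ψ : E → ℝ} {x : E} (ha : ContDiffAt ℝ 2 a x)
    (hψ : ContDiffAt ℝ 2 ψ x) (hx : ψ x ≠ 0) (t : ℝ) (w : E) :
    fderiv ℝ (fun p => fderiv ℝ (fun q : E × ℝ => (q.2 - a q.1) / ψ q.1) p (0, 1)) (x, t) (w, 0)
      = -fderiv ℝ ψ x w / ψ x ^ 2 := by
  rw [fderiv_fderiv_sub_div_apply ha hψ hx]
  simp

theorem fderiv_fderiv_sub_div_apply_normal {a ψ : E → ℝ} {x : E} (ha : ContDiffAt ℝ 2 a x)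
    (hψ : ContDiffAt ℝ 2 ψ x) (hx : ψ x ≠ 0) (t : ℝ) :
    fderiv ℝ (fun p => fderiv ℝ (fun q : E × ℝ => (q.2 - a q.1) / ψ q.1) p (0, 1)) (x, t) (0, 1)
      = 0 := by
  rw [fderiv_fderiv_sub_div_apply ha hψ hx]
  simp

theorem abs_fderiv_fderiv_sub_div_tangential_le {a ψ : E → ℝ} {x : E} {t κ C₀ s : ℝ}
    (ha : ContDiffAt ℝ 2 a x) (hψ : ContDiffAt ℝ 2 ψ x) (hC₀ : 0 < C₀) (hs : 0 < s)
    (hxs : ‖x‖ ^ 2 ≤ s) (hψs : 1 / C₀ * s ≤ ψ x) (ht : a x ≤ t) (ht' : t - a x ≤ ψ x)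
    (hDa : ‖fderiv ℝ a x‖ ≤ κ * ‖x‖) (hDψ : ‖fderiv ℝ ψ x‖ ≤ 2 * κ * ‖x‖)
    (hD2a : ‖iteratedFDeriv ℝ 2 a x‖ ≤ κ) (hD2ψ : ‖iteratedFDeriv ℝ 2 ψ x‖ ≤ 2 * κ)
    {u w : E} (hu : ‖u‖ ≤ 1) (hw : ‖w‖ ≤ 1) :
    |fderiv ℝ (fun p => fderiv ℝ (fun q : E × ℝ => (q.2 - a q.1) / ψ q.1) p (u, 0)) (x, t) (w, 0)|
      ≤ (3 * κ * C₀ + 12 * κ ^ 2 * C₀ ^ 2) / s := by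
  have hψx : 0 < ψ x := (by positivity : 0 < 1 / C₀ * s).trans_le hψs
  have hinv : (ψ x)⁻¹ ≤ C₀ / s := (inv_anti₀ (by positivity) hψs).trans_eq (by field_simp)
  have hκ : 0 ≤ κ := (norm_nonneg _).trans hD2a
  calc _ ≤ ((‖iteratedFDeriv ℝ 2 a x‖ + ‖iteratedFDeriv ℝ 2 ψ x‖) / ψ x
          + 2 * ‖fderiv ℝ ψ x‖ * (‖fderiv ℝ a x‖ + ‖fderiv ℝ ψ x‖) / ψ x ^ 2) * (‖w‖ * ‖u‖) :=
        abs_fderiv_fderiv_sub_div_le ha hψ hψx ht ht' u w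
    _ ≤ ((κ + 2 * κ) / ψ x + 2 * (2 * κ * ‖x‖) * (κ * ‖x‖ + 2 * κ * ‖x‖) / ψ x ^ 2) * (1 * 1) := by
        gcongr
    _ = 3 * κ * (ψ x)⁻¹ + 12 * κ ^ 2 * ‖x‖ ^ 2 * (ψ x)⁻¹ ^ 2 := by ring
    _ ≤ 3 * κ * (C₀ / s) + 12 * κ ^ 2 * s * (C₀ / s) ^ 2 := by gcongr
    _ = (3 * κ * C₀ + 12 * κ ^ 2 * C₀ ^ 2) / s := by field_simp

theorem abs_fderiv_fderiv_sub_div_mixed_le {a ψ : E → ℝ} {x : E} {t κ C₀ s : ℝ}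
    (ha : ContDiffAt ℝ 2 a x) (hψ : ContDiffAt ℝ 2 ψ x) (hC₀ : 0 < C₀) (hs : 0 < s)
    (hψs : 1 / C₀ * s ≤ ψ x) (hDψ : ‖fderiv ℝ ψ x‖ ≤ 2 * κ * ‖x‖) {w : E} (hw : ‖w‖ ≤ 1) :
    |fderiv ℝ (fun p => fderiv ℝ (fun q : E × ℝ => (q.2 - a q.1) / ψ q.1) p (0, 1)) (x, t) (w, 0)|
      ≤ 2 * κ * C₀ ^ 2 * ‖x‖ / s ^ 2 := by
  have hψx : 0 < ψ x := (by positivity : 0 < 1 / C₀ * s).trans_le hψs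
  have hinv : (ψ x)⁻¹ ≤ C₀ / s := (inv_anti₀ (by positivity) hψs).trans_eq (by field_simp)
  have hκx : 0 ≤ 2 * κ * ‖x‖ := (norm_nonneg _).trans hDψ
  have hDw : |fderiv ℝ ψ x w| ≤ 2 * κ * ‖x‖ := by
    calc _ ≤ ‖fderiv ℝ ψ x‖ * ‖w‖ := (fderiv ℝ ψ x).le_opNorm w
      _ ≤ 2 * κ * ‖x‖ * 1 := by gcongr
      _ = _ := mul_one _
  rw [fderiv_fderiv_sub_div_apply_mixed ha hψ hψx.ne', abs_div, abs_neg, abs_of_pos (pow_pos hψx 2),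
    div_eq_mul_inv, ← inv_pow]
  calc _ ≤ 2 * κ * ‖x‖ * (C₀ / s) ^ 2 := by gcongr
    _ = 2 * κ * C₀ ^ 2 * ‖x‖ / s ^ 2 := by ring

theorem stmt4_general (n : ℕ) (κ₂ R C₀ : ℝ) (hκ₂ : 0 < κ₂) (hC₀ : 0 < C₀) :
    ∃ C > (0:ℝ), ∀ ε : ℝ, 0 < ε → ε < 1/2 →
      ∀ h₁ h : EuclideanSpace ℝ (Fin n) → ℝ,
        ContDiff ℝ 2 h₁ → ContDiff ℝ 2 h →
        h₁ 0 = 0 → h 0 = 0 → fderiv ℝ h₁ 0 = 0 → fderiv ℝ h 0 = 0 →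
        (∀ i : ℕ, i ≤ 2 → ∀ x : EuclideanSpace ℝ (Fin n), ‖x‖ < 2 * R →
          ‖iteratedFDeriv ℝ i h₁ x‖ ≤ κ₂ ∧ ‖iteratedFDeriv ℝ i h x‖ ≤ κ₂) →
        (∀ x : EuclideanSpace ℝ (Fin n), ‖x‖ < 2 * R →
          (1/C₀) * (ε + ‖x‖ ^ 2) ≤ ε + h₁ x - h x) →
        ∀ (x' : EuclideanSpace ℝ (Fin n)) (t : ℝ),
          ‖x'‖ < 2 * R → h x' < t → t < ε + h₁ x' →
          (∀ k j : Fin n,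
            |fderiv ℝ (fun p : EuclideanSpace ℝ (Fin n) × ℝ =>
                fderiv ℝ (fun q : EuclideanSpace ℝ (Fin n) × ℝ =>
                  (q.2 - h q.1) / (ε + h₁ q.1 - h q.1)) p
                  (EuclideanSpace.single j 1, 0)) (x', t)
                (EuclideanSpace.single k 1, 0)|
              ≤ C / (ε + ‖x'‖ ^ 2)) ∧
          (∀ k : Fin n,
            |fderiv ℝ (fun p : EuclideanSpace ℝ (Fin n) × ℝ =>
                fderiv ℝ (fun q : EuclideanSpace ℝ (Fin n) × ℝ =>
                  (q.2 - h q.1) / (ε + h₁ q.1 - h q.1)) p (0, 1)) (x', t)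
                (EuclideanSpace.single k 1, 0)|
              ≤ C * ‖x'‖ / (ε + ‖x'‖ ^ 2) ^ 2) ∧
          fderiv ℝ (fun p : EuclideanSpace ℝ (Fin n) × ℝ =>
              fderiv ℝ (fun q : EuclideanSpace ℝ (Fin n) × ℝ =>
                (q.2 - h q.1) / (ε + h₁ q.1 - h q.1)) p (0, 1)) (x', t) (0, 1) = 0 := by
  refine ⟨3 * κ₂ * C₀ + 12 * κ₂ ^ 2 * C₀ ^ 2 + 2 * κ₂ * C₀ ^ 2, by positivity, ?_⟩
  intro ε hε _ h₁ h hh₁ hh _ _ hDh₁0 hDh0 hκ hψ x' t hx' ht ht'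
  have hs : 0 < ε + ‖x'‖ ^ 2 := by positivity
  have hψC : ContDiff ℝ 2 fun y => ε + h₁ y - h y := (contDiff_const.add hh₁).sub hh
  have hball : x' ∈ ball 0 (2 * R) := mem_ball_zero_iff.2 hx'
  have hD2 (y) (hy : y ∈ ball 0 (2 * R)) := hκ 2 le_rfl y (mem_ball_zero_iff.1 hy)
  have hDh := norm_fderiv_le_of_norm_iteratedFDeriv_two_le hh.contDiffOn hDh0
    (fun y hy => (hD2 y hy).2) hball
  have hDψ : ‖fderiv ℝ (fun y => ε + h₁ y - h y) x'‖ ≤ 2 * κ₂ * ‖x'‖ := by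
    have := norm_iteratedFDeriv_const_add_sub_le one_ne_zero
      (hh₁.contDiffAt.of_le (by norm_num)) (hh.contDiffAt.of_le (by norm_num)) ε (x := x')
    simp only [norm_iteratedFDeriv_one] at this
    linarith [norm_fderiv_le_of_norm_iteratedFDeriv_two_le hh₁.contDiffOn hDh₁0
      (fun y hy => (hD2 y hy).1) hball]
  have hD2ψ : ‖iteratedFDeriv ℝ 2 (fun y => ε + h₁ y - h y) x'‖ ≤ 2 * κ₂ := by
    linarith [hD2 x' hball, norm_iteratedFDeriv_const_add_sub_le two_ne_zero hh₁.contDiffAt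
      hh.contDiffAt ε (x := x')]
  have hsingle (i : Fin n) : ‖EuclideanSpace.single i (1 : ℝ)‖ ≤ 1 := by simp
  have hψx : 0 < ε + h₁ x' - h x' := (by positivity : 0 < 1 / C₀ * _).trans_le (hψ x' hx')
  refine ⟨fun k j => ?_, fun k => ?_,
    fderiv_fderiv_sub_div_apply_normal hh.contDiffAt hψC.contDiffAt hψx.ne' t⟩
  · refine (abs_fderiv_fderiv_sub_div_tangential_le (ψ := fun y => ε + h₁ y - h y)
      hh.contDiffAt hψC.contDiffAt hC₀ hs (le_add_of_nonneg_left hε.le) (hψ x' hx') ht.le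
      (by linarith) hDh hDψ (hD2 x' hball).2 hD2ψ (hsingle j) (hsingle k)).trans ?_
    gcongr ?_ / _
    exact le_add_of_nonneg_right (by positivity)
  · refine (abs_fderiv_fderiv_sub_div_mixed_le (ψ := fun y => ε + h₁ y - h y)
      hh.contDiffAt hψC.contDiffAt hC₀ hs (hψ x' hx') hDψ (hsingle k)).trans ?_
    gcongr ?_ * _ / _
    exact le_add_of_nonneg_left (by positivity)

/-- second-derivative bounds for the auxiliary function
v̄(x',x_d) = (x_d - h(x'))/(ε + h₁(x') - h(x')) in the narrow region. -/
theorem stmt4 (n : ℕ) (κ₂ R C₀ : ℝ) (hκ₂ : 0 < κ₂) (hR : 0 < R) (hC₀ : 0 < C₀) :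
    ∃ C > (0:ℝ), ∀ ε : ℝ, 0 < ε → ε < 1/2 →
      ∀ h₁ h : EuclideanSpace ℝ (Fin n) → ℝ,
        ContDiff ℝ 2 h₁ → ContDiff ℝ 2 h →
        h₁ 0 = 0 → h 0 = 0 → fderiv ℝ h₁ 0 = 0 → fderiv ℝ h 0 = 0 →
        (∀ i : ℕ, i ≤ 2 → ∀ x : EuclideanSpace ℝ (Fin n), ‖x‖ < 2 * R →
          ‖iteratedFDeriv ℝ i h₁ x‖ ≤ κ₂ ∧ ‖iteratedFDeriv ℝ i h x‖ ≤ κ₂) →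
        (∀ x : EuclideanSpace ℝ (Fin n), ‖x‖ < 2 * R →
          (1/C₀) * (ε + ‖x‖ ^ 2) ≤ ε + h₁ x - h x) →
        ∀ (x' : EuclideanSpace ℝ (Fin n)) (t : ℝ),
          ‖x'‖ < 2 * R → h x' < t → t < ε + h₁ x' →
          (∀ k j : Fin n,
            |fderiv ℝ (fun p : EuclideanSpace ℝ (Fin n) × ℝ =>
                fderiv ℝ (fun q : EuclideanSpace ℝ (Fin n) × ℝ =>
                  (q.2 - h q.1) / (ε + h₁ q.1 - h q.1)) p
                  (EuclideanSpace.single j 1, 0)) (x', t)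
                (EuclideanSpace.single k 1, 0)|
              ≤ C / (ε + ‖x'‖ ^ 2)) ∧
          (∀ k : Fin n,
            |fderiv ℝ (fun p : EuclideanSpace ℝ (Fin n) × ℝ =>
                fderiv ℝ (fun q : EuclideanSpace ℝ (Fin n) × ℝ =>
                  (q.2 - h q.1) / (ε + h₁ q.1 - h q.1)) p (0, 1)) (x', t)
                (EuclideanSpace.single k 1, 0)|
              ≤ C * ‖x'‖ / (ε + ‖x'‖ ^ 2) ^ 2) ∧
          fderiv ℝ (fun p : EuclideanSpace ℝ (Fin n) × ℝ =>
              fderiv ℝ (fun q : EuclideanSpace ℝ (Fin n) × ℝ =>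
                (q.2 - h q.1) / (ε + h₁ q.1 - h q.1)) p (0, 1)) (x', t) (0, 1) = 0 :=
  stmt4_general n κ₂ R C₀ hκ₂ hC₀
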